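/- Let 0 < λ₀ < 1 be a fixed constant. Then ∫_{-Δ}^{Δ} |I₁(t)|² dt ≪ X and ∫_{-Δ}^{Δ} |I₂(t)|² dt ≪ 1, where Δ = X^{-12/13} log X. -/

import Mathlib

open MeasureTheory

/-- The integral `I_k(t) = ∫_{(λ₀X)^{1/k}}^{X^{1/k}} e(t y^k) dy`, for `k = 1, 2`. -/
noncomputable def Ik (lam₀ X : ℝ) (k : ℕ) (t : ℝ) : ℂ :=
  ∫ y in ((lam₀ * X) ^ (1/(k:ℝ)))..(X ^ (1/(k:ℝ))),
    Complex.exp (2 * Real.pi * Complex.I * (t * y ^ k))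

namespace IkAux

lemma c_ne (t : ℝ) (ht : t ≠ 0) : (2 * (Real.pi:ℂ) * Complex.I * (t:ℂ)) ≠ 0 := by
  simp [Real.pi_ne_zero, Complex.I_ne_zero, ht]

lemma norm_c (t : ℝ) : ‖(2 * (Real.pi:ℂ) * Complex.I * (t:ℂ))‖ = 2 * Real.pi * |t| := by
  simp [Complex.norm_real, Complex.norm_I,
    abs_of_pos Real.pi_pos]

lemma norm_integrand (t x : ℝ) (k : ℕ) :
    ‖Complex.exp (2 * Real.pi * Complex.I * (t * x ^ k))‖ = 1 := by
  rw [Complex.norm_exp]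
  norm_num [Complex.mul_re, Complex.mul_im, ← Complex.ofReal_pow]

lemma triv_bound (t a b : ℝ) (k : ℕ) :
    ‖∫ y in a..b, Complex.exp (2 * Real.pi * Complex.I * (t * y ^ k))‖ ≤ |b - a| := by
  have h := intervalIntegral.norm_integral_le_of_norm_le_const (C := 1)
    (f := fun y : ℝ => Complex.exp (2 * Real.pi * Complex.I * (t * y ^ k))) (a := a) (b := b)
    (fun x _ => le_of_eq (norm_integrand t x k))
  simpa using h

lemma Ik_continuous (lam₀ X : ℝ) (k : ℕ) : Continuous (Ik lam₀ X k) := by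
  unfold Ik
  apply intervalIntegral.continuous_parametric_intervalIntegral_of_continuous'
  apply Continuous.cexp
  fun_prop

lemma I1_bound (t a b : ℝ) (ht : t ≠ 0) :
    ‖∫ y in a..b, Complex.exp (2 * Real.pi * Complex.I * (t * y ^ (1:ℕ)))‖
      ≤ 1 / (Real.pi * |t|) := by
  have hc := c_ne t ht
  have h1 : (∫ y in a..b, Complex.exp (2 * Real.pi * Complex.I * (t * y ^ (1:ℕ))))
      = ∫ y in a..b, Complex.exp ((2 * Real.pi * Complex.I * t) * y) := by
    apply intervalIntegral.integral_congr
    intro y _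
    norm_num
    ring_nf
  rw [h1, integral_exp_mul_complex hc]
  rw [norm_div, norm_c t]
  have h2 : ‖Complex.exp (2 * ↑Real.pi * Complex.I * ↑t * ↑b)
      - Complex.exp (2 * ↑Real.pi * Complex.I * ↑t * ↑a)‖ ≤ 2 := by
    have e1 : ∀ z : ℝ, ‖Complex.exp (2 * ↑Real.pi * Complex.I * ↑t * ↑z)‖ = 1 := by
      intro z
      rw [Complex.norm_exp]
      norm_num [Complex.mul_re, Complex.mul_im]
    calc _ ≤ ‖Complex.exp (2 * ↑Real.pi * Complex.I * ↑t * ↑b)‖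
            + ‖Complex.exp (2 * ↑Real.pi * Complex.I * ↑t * ↑a)‖ := norm_sub_le _ _
    _ ≤ 2 := by rw [e1, e1]; norm_num
  have hpt : 0 < Real.pi * |t| := mul_pos Real.pi_pos (abs_pos.2 ht)
  rw [div_le_div_iff₀ (by positivity) hpt]
  calc ‖Complex.exp (2 * ↑Real.pi * Complex.I * ↑t * ↑b)
      - Complex.exp (2 * ↑Real.pi * Complex.I * ↑t * ↑a)‖ * (Real.pi * |t|)
      ≤ 2 * (Real.pi * |t|) := by gcongr
    _ = 1 * (2 * Real.pi * |t|) := by ring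

lemma I2_bound (t a b : ℝ) (ht : t ≠ 0) (ha : 0 < a) (hab : a ≤ b) :
    ‖∫ y in a..b, Complex.exp (2 * Real.pi * Complex.I * (t * y ^ (2:ℕ)))‖
      ≤ 1 / (Real.pi * |t| * a) := by
  set c : ℂ := 2 * (Real.pi:ℂ) * Complex.I * (t:ℂ) with hcdef
  have hc : c ≠ 0 := c_ne t ht
  have hb : 0 < b := lt_of_lt_of_le ha hab
  have hpos : ∀ x ∈ Set.uIcc a b, (0:ℝ) < x := by
    intro x hx
    rw [Set.uIcc_of_le hab] at hx
    exact lt_of_lt_of_le ha hx.1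
  have hu : ∀ x ∈ Set.uIcc a b, HasDerivAt (fun y : ℝ => ((y:ℂ))⁻¹) (-(((x:ℂ))^2)⁻¹) x := by
    intro x hx
    have hx0 : (x:ℂ) ≠ 0 := by exact_mod_cast (hpos x hx).ne'
    exact (hasDerivAt_inv hx0).comp_ofReal
  have hv : ∀ x : ℝ, HasDerivAt (fun y : ℝ => Complex.exp (c * (y:ℂ)^2))
      (Complex.exp (c * (x:ℂ)^2) * (c * (2 * (x:ℂ)))) x := by
    intro x
    have h1 : HasDerivAt (fun y : ℝ => c * ((y:ℂ))^2) (c * (2 * (x:ℂ))) x := by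
      have := ((hasDerivAt_pow 2 ((x:ℂ))).const_mul c).comp_ofReal
      simpa [mul_comm, mul_assoc, pow_one] using this
    exact h1.cexp
  have hu' : IntervalIntegrable (fun x : ℝ => -(((x:ℂ))^2)⁻¹) volume a b := by
    apply ContinuousOn.intervalIntegrable
    apply ContinuousOn.neg
    apply ContinuousOn.inv₀
    · fun_prop
    · intro x hx
      exact_mod_cast pow_ne_zero 2 (by exact_mod_cast (hpos x hx).ne' : (x:ℂ) ≠ 0)
  have hv' : IntervalIntegrable (fun x : ℝ => Complex.exp (c * (x:ℂ)^2) * (c * (2 * (x:ℂ))))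
      volume a b := by
    apply Continuous.intervalIntegrable; fun_prop
  have parts := intervalIntegral.integral_mul_deriv_eq_deriv_mul hu (fun x _ => hv x) hu' hv'
  have key : (∫ y in a..b, Complex.exp (2 * Real.pi * Complex.I * (t * y ^ (2:ℕ))))
      = (2*c)⁻¹ * ∫ x in a..b, ((x:ℂ))⁻¹ * (Complex.exp (c * (x:ℂ)^2) * (c * (2 * (x:ℂ)))) := by
    rw [← intervalIntegral.integral_const_mul]
    apply intervalIntegral.integral_congr
    intro y hy
    have hy0 : (y:ℂ) ≠ 0 := by exact_mod_cast (hpos y hy).ne'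
    field_simp
    ring_nf
    simp only [hcdef]; ring_nf
  rw [key, parts]
  have hnorme : ∀ z : ℝ, ‖Complex.exp (c * (z:ℂ)^2)‖ = 1 := by
    intro z
    rw [Complex.norm_exp, hcdef]
    norm_num [Complex.mul_re, Complex.mul_im, pow_two]
  have hrem : ‖∫ x in a..b, -(((x:ℂ))^2)⁻¹ * Complex.exp (c * (x:ℂ)^2)‖ ≤ a⁻¹ - b⁻¹ := by
    calc ‖∫ x in a..b, -(((x:ℂ))^2)⁻¹ * Complex.exp (c * (x:ℂ)^2)‖
        ≤ ∫ x in a..b, ‖-(((x:ℂ))^2)⁻¹ * Complex.exp (c * (x:ℂ)^2)‖ :=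
          intervalIntegral.norm_integral_le_integral_norm hab
      _ = ∫ x in a..b, (x:ℝ) ^ (-2 : ℤ) := by
          apply intervalIntegral.integral_congr
          intro x hx
          show ‖-(((x:ℂ))^2)⁻¹ * Complex.exp (c * (x:ℂ)^2)‖ = (x:ℝ) ^ (-2 : ℤ)
          rw [norm_mul, norm_neg, norm_inv, hnorme, mul_one]
          rw [show ((x:ℂ)^2) = (((x^2 : ℝ)):ℂ) by push_cast; ring]
          rw [Complex.norm_real, Real.norm_eq_abs, abs_of_pos (pow_pos (hpos x hx) 2)]
          rw [zpow_neg]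
          norm_num [zpow_two, sq]
      _ = a⁻¹ - b⁻¹ := by
          rw [integral_zpow (Or.inr ⟨by norm_num, by
            rw [Set.uIcc_of_le hab]; intro h; exact absurd h.1 (by linarith)⟩)]
          norm_num [zpow_neg]
          ring
  have hba : ‖((b:ℂ))⁻¹ * Complex.exp (c * (b:ℂ)^2) - ((a:ℂ))⁻¹ * Complex.exp (c * (a:ℂ)^2)
      - ∫ x in a..b, -(((x:ℂ))^2)⁻¹ * Complex.exp (c * (x:ℂ)^2)‖ ≤ 2 * a⁻¹ := by
    have n1 : ‖((b:ℂ))⁻¹ * Complex.exp (c * (b:ℂ)^2)‖ = b⁻¹ := by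
      rw [norm_mul, hnorme, mul_one, norm_inv, Complex.norm_real, Real.norm_eq_abs,
        abs_of_pos hb]
    have n2 : ‖((a:ℂ))⁻¹ * Complex.exp (c * (a:ℂ)^2)‖ = a⁻¹ := by
      rw [norm_mul, hnorme, mul_one, norm_inv, Complex.norm_real, Real.norm_eq_abs,
        abs_of_pos ha]
    calc _ ≤ ‖((b:ℂ))⁻¹ * Complex.exp (c * (b:ℂ)^2) - ((a:ℂ))⁻¹ * Complex.exp (c * (a:ℂ)^2)‖
            + ‖∫ x in a..b, -(((x:ℂ))^2)⁻¹ * Complex.exp (c * (x:ℂ)^2)‖ := norm_sub_le _ _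
      _ ≤ (‖((b:ℂ))⁻¹ * Complex.exp (c * (b:ℂ)^2)‖ + ‖((a:ℂ))⁻¹ * Complex.exp (c * (a:ℂ)^2)‖)
            + (a⁻¹ - b⁻¹) := by gcongr; exact norm_sub_le _ _
      _ = 2 * a⁻¹ := by rw [n1, n2]; ring
  rw [norm_mul, norm_inv]
  have hn2c : ‖(2*c : ℂ)‖ = 4 * Real.pi * |t| := by
    rw [norm_mul, hcdef, norm_c]; norm_num; ring
  rw [hn2c]
  refine le_trans (mul_le_mul_of_nonneg_left hba (by positivity)) ?_
  have e : (4 * Real.pi * |t|)⁻¹ * (2 * a⁻¹) = 1 / (2 * (Real.pi * |t| * a)) := by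
    have h1 : |t| ≠ 0 := abs_ne_zero.2 ht
    field_simp
    ring
  rw [e]
  refine one_div_le_one_div_of_le (by positivity) ?_
  have : 0 < Real.pi * |t| * a := by positivity
  linarith

/-- The main splitting estimate. -/
lemma split_bound (Δ ε M B : ℝ) (hε : 0 < ε) (hεΔ : ε ≤ Δ) (hM : 0 ≤ M) (hB : 0 ≤ B)
    (f : ℝ → ℂ) (hf : Continuous f)
    (hbig : ∀ t, ‖f t‖ ≤ M)
    (hsmall : ∀ t, t ≠ 0 → ‖f t‖ ≤ B / |t|) :
    (∫ t in (-Δ)..Δ, ‖f t‖ ^ 2) ≤ 2 * ε * M ^ 2 + 2 * B ^ 2 / ε := by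
  have hgc : Continuous fun t => ‖f t‖ ^ 2 := hf.norm.pow 2
  have hii : ∀ u v : ℝ, IntervalIntegrable (fun t => ‖f t‖ ^ 2) volume u v :=
    fun u v => hgc.intervalIntegrable u v
  have split1 : (∫ t in (-Δ)..Δ, ‖f t‖ ^ 2)
      = ((∫ t in (-Δ)..(-ε), ‖f t‖ ^ 2) + (∫ t in (-ε)..ε, ‖f t‖ ^ 2))
        + (∫ t in ε..Δ, ‖f t‖ ^ 2) := by
    rw [intervalIntegral.integral_add_adjacent_intervals (hii _ _) (hii _ _),
        intervalIntegral.integral_add_adjacent_intervals (hii _ _) (hii _ _)]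
  have hsq : ∀ t : ℝ, t ≠ 0 → ‖f t‖ ^ 2 ≤ B ^ 2 * t ^ (-2 : ℤ) := by
    intro t ht0
    calc ‖f t‖ ^ 2 ≤ (B / |t|) ^ 2 := pow_le_pow_left₀ (norm_nonneg _) (hsmall t ht0) 2
      _ = B ^ 2 * t ^ (-2 : ℤ) := by
          rw [div_pow, sq_abs, div_eq_mul_inv, zpow_neg]
          norm_num [zpow_two, sq]
  have hint : ∀ u v : ℝ, (0:ℝ) ∉ Set.uIcc u v →
      IntervalIntegrable (fun t : ℝ => B ^ 2 * t ^ (-2 : ℤ)) volume u v := by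
    intro u v h0
    apply ContinuousOn.intervalIntegrable
    apply ContinuousOn.mul continuousOn_const
    intro x hx
    apply ContinuousAt.continuousWithinAt
    apply continuousAt_zpow₀
    left
    intro hx0
    exact h0 (hx0 ▸ hx)
  have hmid : (∫ t in (-ε)..ε, ‖f t‖ ^ 2) ≤ 2 * ε * M ^ 2 := by
    calc (∫ t in (-ε)..ε, ‖f t‖ ^ 2) ≤ ∫ _ in (-ε)..ε, M ^ 2 :=
        intervalIntegral.integral_mono_on (by linarith) (hii _ _) intervalIntegrable_const
          (fun t _ => pow_le_pow_left₀ (norm_nonneg _) (hbig t) 2)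
      _ = (ε - (-ε)) * M ^ 2 := by rw [intervalIntegral.integral_const, smul_eq_mul]
      _ = 2 * ε * M ^ 2 := by ring
  have hright : (∫ t in ε..Δ, ‖f t‖ ^ 2) ≤ B ^ 2 / ε := by
    have h0 : (0:ℝ) ∉ Set.uIcc ε Δ := by
      rw [Set.uIcc_of_le hεΔ]; intro h; exact absurd h.1 (by linarith)
    calc (∫ t in ε..Δ, ‖f t‖ ^ 2) ≤ ∫ t in ε..Δ, B ^ 2 * t ^ (-2 : ℤ) :=
        intervalIntegral.integral_mono_on hεΔ (hii _ _) (hint _ _ h0)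
          (fun t htm => hsq t (by have := lt_of_lt_of_le hε htm.1; linarith))
      _ = B ^ 2 * (ε⁻¹ - Δ⁻¹) := by
          rw [intervalIntegral.integral_const_mul, integral_zpow (Or.inr ⟨by norm_num, h0⟩)]
          norm_num [zpow_neg]
          left; ring
      _ ≤ B ^ 2 / ε := by
          rw [div_eq_mul_inv]
          have h1 : 0 ≤ Δ⁻¹ := inv_nonneg.2 (by linarith)
          have h2 : ε⁻¹ - Δ⁻¹ ≤ ε⁻¹ := by linarith
          exact mul_le_mul_of_nonneg_left h2 (by positivity)
  have hleft : (∫ t in (-Δ)..(-ε), ‖f t‖ ^ 2) ≤ B ^ 2 / ε := by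
    have hle : -Δ ≤ -ε := by linarith
    have h0 : (0:ℝ) ∉ Set.uIcc (-Δ) (-ε) := by
      rw [Set.uIcc_of_le hle]; intro h; exact absurd h.2 (by simp; linarith)
    calc (∫ t in (-Δ)..(-ε), ‖f t‖ ^ 2) ≤ ∫ t in (-Δ)..(-ε), B ^ 2 * t ^ (-2 : ℤ) :=
        intervalIntegral.integral_mono_on hle (hii _ _) (hint _ _ h0)
          (fun t htm => hsq t (by have := htm.2; intro h; rw [h] at this; linarith))
      _ = B ^ 2 * (ε⁻¹ - Δ⁻¹) := by
          rw [intervalIntegral.integral_const_mul, integral_zpow (Or.inr ⟨by norm_num, h0⟩)]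
          norm_num [zpow_neg]
          left
          simp only [div_neg, div_one]
          ring
      _ ≤ B ^ 2 / ε := by
          rw [div_eq_mul_inv]
          have h1 : 0 ≤ Δ⁻¹ := inv_nonneg.2 (by linarith)
          have h2 : ε⁻¹ - Δ⁻¹ ≤ ε⁻¹ := by linarith
          exact mul_le_mul_of_nonneg_left h2 (by positivity)
  rw [split1]
  have : 2 * B ^ 2 / ε = B ^ 2 / ε + B ^ 2 / ε := by ring
  rw [this]
  linarith

end IkAux

/-- `∫_{-Δ}^{Δ} |I₁(t)|² dt ≪ X` and `∫_{-Δ}^{Δ} |I₂(t)|² dt ≪ 1`,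
with `Δ = X^{-12/13} log X`. -/
theorem integral_Ik_sq (lam₀ : ℝ) (h0 : 0 < lam₀) (h1 : lam₀ < 1) :
    ∃ C > 0, ∃ X₀ : ℝ, ∀ X ≥ X₀,
      (∫ t in (-(X ^ (-12/13 : ℝ) * Real.log X))..(X ^ (-12/13 : ℝ) * Real.log X),
        ‖Ik lam₀ X 1 t‖ ^ 2) ≤ C * X ∧
      (∫ t in (-(X ^ (-12/13 : ℝ) * Real.log X))..(X ^ (-12/13 : ℝ) * Real.log X),
        ‖Ik lam₀ X 2 t‖ ^ 2) ≤ C := by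
  refine ⟨4 + 2 / lam₀, by positivity, 3, fun X hX => ?_⟩
  have hX0 : (0:ℝ) < X := by linarith
  have hX1 : (1:ℝ) ≤ X := by linarith
  have hlogX : (1:ℝ) ≤ Real.log X := by
    rw [Real.le_log_iff_exp_le hX0]
    calc Real.exp 1 ≤ 2.7182818286 := Real.exp_one_lt_d9.le
      _ ≤ X := by linarith
  set Δ : ℝ := X ^ (-12/13 : ℝ) * Real.log X with hΔ
  have hε : (0:ℝ) < X⁻¹ := by positivity
  have hεΔ : X⁻¹ ≤ Δ := by
    have e1 : X⁻¹ = X ^ (-1 : ℝ) := by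
      rw [Real.rpow_neg hX0.le, Real.rpow_one]
    have e2 : X ^ (-1 : ℝ) ≤ X ^ (-12/13 : ℝ) :=
      Real.rpow_le_rpow_of_exponent_le hX1 (by norm_num)
    calc X⁻¹ = X ^ (-1 : ℝ) := e1
      _ ≤ X ^ (-12/13 : ℝ) := e2
      _ ≤ X ^ (-12/13 : ℝ) * Real.log X := le_mul_of_one_le_right (by positivity) hlogX
  have hπ1 : (1:ℝ) ≤ Real.pi := by linarith [Real.pi_gt_three]
  have hπinv : Real.pi⁻¹ ≤ 1 := inv_le_one_of_one_le₀ hπ1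
  have hπinv0 : 0 ≤ Real.pi⁻¹ := by positivity
  constructor
  · -- k = 1
    have hIk : Ik lam₀ X 1 = fun t : ℝ => ∫ y in (lam₀ * X)..X,
        Complex.exp (2 * Real.pi * Complex.I * (t * y ^ (1:ℕ))) := by
      funext t
      unfold Ik
      norm_num
    have hbig : ∀ t, ‖Ik lam₀ X 1 t‖ ≤ X := by
      intro t
      rw [hIk]
      refine (IkAux.triv_bound t (lam₀ * X) X 1).trans ?_
      rw [abs_of_nonneg (by nlinarith)]
      nlinarith
    have hsmall : ∀ t, t ≠ 0 → ‖Ik lam₀ X 1 t‖ ≤ Real.pi⁻¹ / |t| := by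
      intro t ht
      rw [hIk]
      refine (IkAux.I1_bound t (lam₀ * X) X ht).trans_eq ?_
      rw [div_eq_mul_inv, mul_inv, one_mul, div_eq_mul_inv]
    have hcont : Continuous (Ik lam₀ X 1) := IkAux.Ik_continuous lam₀ X 1
    have key := IkAux.split_bound Δ X⁻¹ X Real.pi⁻¹ hε hεΔ hX0.le hπinv0
      (Ik lam₀ X 1) hcont hbig hsmall
    refine key.trans ?_
    have e : 2 * X⁻¹ * X ^ 2 + 2 * (Real.pi⁻¹) ^ 2 / X⁻¹
        = (2 + 2 * Real.pi⁻¹ ^ 2) * X := by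
      field_simp
    rw [e]
    have h2 : 2 + 2 * Real.pi⁻¹ ^ 2 ≤ 4 + 2 / lam₀ := by
      have : Real.pi⁻¹ ^ 2 ≤ 1 := by nlinarith
      have : 0 ≤ 2 / lam₀ := by positivity
      nlinarith
    nlinarith
  · -- k = 2
    set ca : ℝ := (lam₀ * X) ^ (1/((2:ℕ):ℝ)) with hca
    set cb : ℝ := X ^ (1/((2:ℕ):ℝ)) with hcb
    have hca0 : 0 < ca := Real.rpow_pos_of_pos (by positivity) _
    have hcacb : ca ≤ cb := by
      apply Real.rpow_le_rpow (by positivity) (by nlinarith) (by positivity)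
    have hIk : Ik lam₀ X 2 = fun t : ℝ => ∫ y in ca..cb,
        Complex.exp (2 * Real.pi * Complex.I * (t * y ^ (2:ℕ))) := rfl
    have hcb2 : cb ^ 2 = X := by
      rw [hcb, ← Real.rpow_natCast (X ^ (1/((2:ℕ):ℝ))) 2, ← Real.rpow_mul hX0.le]
      norm_num
    have hca2 : ca ^ 2 = lam₀ * X := by
      rw [hca, ← Real.rpow_natCast ((lam₀ * X) ^ (1/((2:ℕ):ℝ))) 2,
        ← Real.rpow_mul (by positivity)]
      norm_num
    have hbig : ∀ t, ‖Ik lam₀ X 2 t‖ ≤ cb := by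
      intro t
      rw [hIk]
      refine (IkAux.triv_bound t ca cb 2).trans ?_
      rw [abs_of_nonneg (by linarith)]
      linarith
    have hsmall : ∀ t, t ≠ 0 → ‖Ik lam₀ X 2 t‖ ≤ (Real.pi * ca)⁻¹ / |t| := by
      intro t ht
      rw [hIk]
      refine (IkAux.I2_bound t ca cb ht hca0 hcacb).trans_eq ?_
      rw [one_div, mul_inv, mul_inv, div_eq_mul_inv]
      ring
    have hcont : Continuous (Ik lam₀ X 2) := IkAux.Ik_continuous lam₀ X 2
    have key := IkAux.split_bound Δ X⁻¹ cb ((Real.pi * ca)⁻¹) hε hεΔ (by positivity)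
      (by positivity) (Ik lam₀ X 2) hcont hbig hsmall
    refine key.trans ?_
    have e : 2 * X⁻¹ * cb ^ 2 + 2 * ((Real.pi * ca)⁻¹) ^ 2 / X⁻¹
        = 2 + 2 * Real.pi⁻¹ ^ 2 / lam₀ := by
      have hXne : X ≠ 0 := hX0.ne'
      have hlne : lam₀ ≠ 0 := h0.ne'
      rw [mul_inv, mul_pow, inv_pow ca, hca2, hcb2]
      field_simp
    rw [e]
    clear hIk hbig hsmall hcont key hεΔ hlogX
    have h2 : Real.pi⁻¹ ^ 2 ≤ 1 := by nlinarith [hπinv, hπinv0]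
    have h3 : 2 * Real.pi⁻¹ ^ 2 / lam₀ ≤ 2 / lam₀ :=
      (div_le_div_iff_of_pos_right h0).2 (by nlinarith [h2])
    linarith
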